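/- Let (X, 𝒟) and (V, ℱ) be measurable spaces, Y a set, h : X → V a measurable function, and G a group acting on X, V, and Y via measurable maps T_{X,g}, T_{V,g}, and on Y. Suppose h is G-equivariant: h(g • x) = g • h(x). Let (μ_x)_{x ∈ X} be a family of probability measures on (X, 𝒟) satisfying μ_{g • x} = (μ_x).map(T_{X,g}) for all x, g, and let ξ be a map from probability measures on (V, ℱ) to Y satisfying ξ(ν.map(T_{V,g})) = g • ξ(ν) for all ν, g. Then the smoothed model f(x) = ξ((μ_x).map(h)) is G-equivariant: f(g • x) = g • f(x) for all x ∈ X, g ∈ G. -/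

import Mathlib

open MeasureTheory Function

theorem MeasureTheory.Measure.map_map_of_semiconj {α β : Type*} [MeasurableSpace α]
    [MeasurableSpace β] {f : α → β} {ga : α → α} {gb : β → β} (hsemi : Semiconj f ga gb)
    (hf : Measurable f) (hga : Measurable ga) (hgb : Measurable gb) (μ : Measure α) :
    (μ.map ga).map f = (μ.map f).map gb := by
  rw [Measure.map_map hf hga, hsemi.comp_eq, ← Measure.map_map hgb hf]

theorem equivariance_preserving_smoothing
    {G X V Y : Type*} [Group G]
    [MeasurableSpace X] [MeasurableSpace V]
    [MulAction G X] [MulAction G V] [MulAction G Y]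
    (hGX : ∀ g : G, Measurable (fun x : X => g • x))
    (hGV : ∀ g : G, Measurable (fun v : V => g • v))
    (h : X → V) (hmeas : Measurable h)
    (hequiv : ∀ (g : G) (x : X), h (g • x) = g • h x)
    (μ : X → Measure X) (hprob : ∀ x, IsProbabilityMeasure (μ x))
    (hμ : ∀ (x : X) (g : G), μ (g • x) = (μ x).map (fun x' : X => g • x'))
    (ξ : Measure V → Y)
    (hξ : ∀ ν : Measure V, IsProbabilityMeasure ν →
      ∀ g : G, ξ (ν.map (fun v : V => g • v)) = g • ξ ν) :
    ∀ (x : X) (g : G), ξ ((μ (g • x)).map h) = g • ξ ((μ x).map h) := by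
  intro x g
  rw [hμ, Measure.map_map_of_semiconj (hequiv g) hmeas (hGX g) (hGV g)]
  exact hξ _ (Measure.isProbabilityMeasure_map hmeas.aemeasurable) g
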